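/- Define a_n = sum over 4-tuples (p,q,r,s) of non-negative integers with p+q+r+s=n of (n!/(p!q!r!s!))^2. Then for all n ≥ 2, n^3 * a_n - 2*(2n-1)*(5n^2 - 5n + 2)*a_{n-1} + 64*(n-1)^3*a_{n-2} = 0. -/

import Mathlib

/-!
Grouping the four parts as `(p, q)` and `(r, s)`, the sum of squared multinomial coefficients
becomes the Domb number `a n = ∑ k, C(n,k)² C(2k,k) C(2(n-k),n-k)`. The recurrence then
follows by creative telescoping: the summand `F n k` is hypergeometric in `n` and in `k`, and
`n³ F n k - 2(2n-1)(5n²-5n+2) F (n-1) k + 64(n-1)³ F (n-2) k = G n (k+1) - G n k`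
for `G n k = R(n,k) F n k` with an explicit rational function `R` (Zeilberger's certificate).
This is checked by expressing every term through `F n k` via the shift ratios of `F`.
Summed over `k`, the right-hand side telescopes to `G n (n+1) - G n 0 = 0`.
-/

open Finset Nat

theorem Nat.multinomial_univ_four (p q r s : ℕ) :
    multinomial univ ![p, q, r, s]
      = (p + q + (r + s)).choose (p + q) * (p + q).choose p * (r + s).choose r := by
  have hspec := multinomial_spec (univ : Finset (Fin 4)) ![p, q, r, s]
  simp only [Fin.prod_univ_four, Fin.sum_univ_four, Matrix.cons_val] at hspec
  refine Nat.eq_of_mul_eq_mul_left (by positivity : 0 < p ! * q ! * r ! * s !) ?_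
  rw [choose_symm_add, choose_symm_add (a := p), choose_symm_add (a := r)]
  calc p ! * q ! * r ! * s ! * multinomial univ ![p, q, r, s]
      = (p + q + (r + s)).choose (r + s) * (p + q)! * (r + s)! := by
        rw [hspec, add_choose_mul_factorial_mul_factorial, add_assoc (p + q)]
    _ = (p + q + (r + s)).choose (r + s) * ((p + q).choose q * p ! * q !)
          * ((r + s).choose s * r ! * s !) := by
        rw [add_choose_mul_factorial_mul_factorial p, add_choose_mul_factorial_mul_factorial r]
    _ = _ := by ring

theorem Nat.sum_antidiagonal_choose_sq (n : ℕ) :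
    ∑ x ∈ antidiagonal n, n.choose x.1 ^ 2 = n.centralBinom := by
  rw [Nat.sum_antidiagonal_eq_sum_range_succ_mk, sum_range_choose_sq, centralBinom]

theorem Finset.Nat.sum_antidiagonal_antidiagonal_snd {M : Type*} [AddCommMonoid M] (n : ℕ)
    (f : ℕ → ℕ → ℕ → M) :
    ∑ x ∈ antidiagonal n, ∑ y ∈ antidiagonal x.2, f x.1 y.1 y.2
      = ∑ x ∈ antidiagonal n, ∑ y ∈ antidiagonal x.1, f y.1 y.2 x.2 := by
  rw [sum_sigma', sum_sigma']
  refine sum_nbij' (fun a => ⟨(a.1.1 + a.2.1, a.2.2), (a.1.1, a.2.1)⟩)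
    (fun a => ⟨(a.2.1, a.2.2 + a.1.2), (a.2.2, a.1.2)⟩) ?_ ?_ ?_ ?_ ?_ <;>
    rintro ⟨⟨_, _⟩, _, _⟩ h <;>
    simp only [mem_sigma, HasAntidiagonal.mem_antidiagonal, and_true] at h ⊢
  · omega
  · omega
  · obtain ⟨-, rfl⟩ := h; rfl
  · obtain ⟨-, rfl⟩ := h; rfl

def dombTerm (n k : ℕ) : ℕ := n.choose k ^ 2 * k.centralBinom * (n - k).centralBinom

def domb (n : ℕ) : ℕ := ∑ k ∈ range (n + 1), dombTerm n k

theorem sum_sq_multinomial_univ_four (n : ℕ) :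
    ∑ x ∈ antidiagonal n, ∑ y ∈ antidiagonal x.2, ∑ z ∈ antidiagonal y.2,
      multinomial univ ![x.1, y.1, z.1, z.2] ^ 2 = domb n := by
  calc _ = ∑ x ∈ antidiagonal n, ∑ y ∈ antidiagonal x.2,
        (x.1 + y.1 + y.2).choose (x.1 + y.1) ^ 2 * (x.1 + y.1).choose x.1 ^ 2
          * y.2.centralBinom := by
        refine sum_congr rfl fun x _ => sum_congr rfl fun y _ => ?_
        rw [← sum_antidiagonal_choose_sq, mul_sum]
        refine sum_congr rfl fun z hz => ?_
        rw [multinomial_univ_four, HasAntidiagonal.mem_antidiagonal.1 hz]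
        ring
    _ = ∑ x ∈ antidiagonal n, ∑ y ∈ antidiagonal x.1,
        (y.1 + y.2 + x.2).choose (y.1 + y.2) ^ 2 * (y.1 + y.2).choose y.1 ^ 2
          * x.2.centralBinom :=
        Finset.Nat.sum_antidiagonal_antidiagonal_snd n fun a b c =>
          (a + b + c).choose (a + b) ^ 2 * (a + b).choose a ^ 2 * c.centralBinom
    _ = ∑ x ∈ antidiagonal n, n.choose x.1 ^ 2 * x.1.centralBinom * x.2.centralBinom := by
        refine sum_congr rfl fun x hx => ?_
        rw [← HasAntidiagonal.mem_antidiagonal.1 hx, ← sum_antidiagonal_choose_sq x.1, mul_sum,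
          sum_mul]
        refine sum_congr rfl fun y hy => ?_
        rw [HasAntidiagonal.mem_antidiagonal.1 hy]
    _ = domb n := Finset.Nat.sum_antidiagonal_eq_sum_range_succ
          (fun i j => n.choose i ^ 2 * i.centralBinom * j.centralBinom) n

theorem dombTerm_eq_zero_of_lt {n k : ℕ} (h : n < k) : dombTerm n k = 0 := by
  simp [dombTerm, choose_eq_zero_of_lt h]

theorem sum_range_dombTerm {n N : ℕ} (h : n < N) : ∑ k ∈ range N, dombTerm n k = domb n :=
  (sum_subset (range_subset_range.2 h) fun _ _ hk =>
    dombTerm_eq_zero_of_lt (by simpa using hk)).symm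

theorem sub_mul_dombTerm_eq_zero {n k : ℕ} (h : n ≤ k) :
    ((n : ℚ) - k) * dombTerm n k = 0 := by
  rcases h.eq_or_lt with rfl | h
  · rw [sub_self, zero_mul]
  · rw [dombTerm_eq_zero_of_lt h, cast_zero, mul_zero]

theorem succ_pow_three_mul_dombTerm_add_succ (k j : ℕ) :
    (j + 1) ^ 3 * dombTerm (k + j + 1) k
      = 2 * (k + j + 1) ^ 2 * (2 * j + 1) * dombTerm (k + j) k := by
  have hC : (k + j + 1).choose k * (j + 1) = (k + j).choose k * (k + j + 1) := by
    rw [choose_mul_succ_eq, show k + j + 1 - k = j + 1 by omega]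
  have hB := succ_mul_centralBinom_succ j
  unfold dombTerm
  rw [show k + j + 1 - k = j + 1 by omega, show k + j - k = j by omega]
  calc (j + 1) ^ 3 * ((k + j + 1).choose k ^ 2 * k.centralBinom * (j + 1).centralBinom)
      = ((k + j + 1).choose k * (j + 1)) ^ 2 * k.centralBinom
          * ((j + 1) * (j + 1).centralBinom) := by ring
    _ = ((k + j).choose k * (k + j + 1)) ^ 2 * k.centralBinom
          * (2 * (2 * j + 1) * j.centralBinom) := by rw [hC, hB]
    _ = _ := by ring

theorem succ_pow_three_mul_dombTerm_succ (k j : ℕ) :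
    (k + 1) ^ 3 * (2 * j + 1) * dombTerm (k + j + 1) (k + 1)
      = (2 * k + 1) * (j + 1) ^ 3 * dombTerm (k + j + 1) k := by
  have hC : (k + j + 1).choose (k + 1) * (k + 1) = (k + j + 1).choose k * (j + 1) := by
    rw [choose_succ_right_eq, show k + j + 1 - k = j + 1 by omega]
  have hBk := succ_mul_centralBinom_succ k
  have hBj := succ_mul_centralBinom_succ j
  unfold dombTerm
  rw [show k + j + 1 - (k + 1) = j by omega, show k + j + 1 - k = j + 1 by omega]
  calc (k + 1) ^ 3 * (2 * j + 1)
        * ((k + j + 1).choose (k + 1) ^ 2 * (k + 1).centralBinom * j.centralBinom)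
      = ((k + j + 1).choose (k + 1) * (k + 1)) ^ 2 * ((k + 1) * (k + 1).centralBinom)
          * ((2 * j + 1) * j.centralBinom) := by ring
    _ = ((k + j + 1).choose k * (j + 1)) ^ 2 * (2 * (2 * k + 1) * k.centralBinom)
          * ((2 * j + 1) * j.centralBinom) := by rw [hC, hBk]
    _ = (2 * k + 1) * (j + 1) ^ 2 * (k + j + 1).choose k ^ 2 * k.centralBinom
          * (2 * (2 * j + 1) * j.centralBinom) := by ring
    _ = _ := by rw [← hBj]; ring

/-- Like `dombTerm_succ_right`, this holds for every `k`: beyond the support both sides vanish,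
so the telescoping below needs no boundary cases. -/
theorem dombTerm_succ_left (n k : ℕ) :
    ((n : ℚ) + 1 - k) ^ 3 * dombTerm (n + 1) k
      = 2 * ((n : ℚ) + 1) ^ 2 * (2 * n - 2 * k + 1) * dombTerm n k := by
  rcases le_or_gt k n with h | h
  · obtain ⟨j, rfl⟩ := exists_add_of_le h
    have := congrArg (Nat.cast : ℕ → ℚ) (succ_pow_three_mul_dombTerm_add_succ k j)
    push_cast at this ⊢
    linear_combination this
  · have := sub_mul_dombTerm_eq_zero (succ_le_of_lt h)
    push_cast at this
    rw [dombTerm_eq_zero_of_lt h]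
    linear_combination ((n : ℚ) + 1 - k) ^ 2 * this

theorem dombTerm_succ_right (n k : ℕ) :
    ((k : ℚ) + 1) ^ 3 * (2 * n - 2 * k - 1) * dombTerm n (k + 1)
      = (2 * k + 1) * ((n : ℚ) - k) ^ 3 * dombTerm n k := by
  rcases lt_or_ge k n with h | h
  · obtain ⟨j, rfl⟩ := exists_add_of_le (succ_le_of_lt h)
    have := congrArg (Nat.cast : ℕ → ℚ) (succ_pow_three_mul_dombTerm_succ k j)
    rw [show k + 1 + j = k + j + 1 by ring]
    push_cast at this ⊢
    linear_combination this
  · rw [dombTerm_eq_zero_of_lt (lt_succ_of_le h)]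
    linear_combination -(2 * (k : ℚ) + 1) * ((n : ℚ) - k) ^ 2 * sub_mul_dombTerm_eq_zero h

theorem two_mul_sub_add_one_ne_zero (a b : ℕ) : 2 * ((a : ℚ) - b) + 1 ≠ 0 := by
  have : 2 * ((a : ℤ) - b) + 1 ≠ 0 := by omega
  exact_mod_cast this

/-- Zeilberger's certificate for the recurrence; `2 * (n - k) - 1` is odd, so it never divides
by zero when `n ≠ 0`. -/
def dombCertificate (n k : ℕ) : ℚ :=
  (k : ℚ) ^ 3 * (8 * k ^ 3 + (12 - 36 * n) * k ^ 2 + (52 * n ^ 2 - 30 * n) * k - 24 * n ^ 3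
    + 20 * n ^ 2) * dombTerm n k / (2 * (n : ℚ) ^ 2 * (2 * n - 2 * k - 1))

theorem dombTerm_telescoping (n k : ℕ) (hn : 2 ≤ n) :
    (n : ℚ) ^ 3 * dombTerm n k - 2 * (2 * n - 1) * (5 * n ^ 2 - 5 * n + 2) * dombTerm (n - 1) k
      + 64 * ((n : ℚ) - 1) ^ 3 * dombTerm (n - 2) k
      = dombCertificate n (k + 1) - dombCertificate n k := by
  obtain ⟨m, rfl⟩ : ∃ m, n = m + 2 := ⟨n - 2, by omega⟩
  have h1 := dombTerm_succ_left (m + 1) k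
  have h0 := dombTerm_succ_left m k
  have hr := dombTerm_succ_right (m + 2) k
  have hd := two_mul_sub_add_one_ne_zero m k
  have hd' : 2 * ((m : ℚ) - k) + 3 ≠ 0 := by
    convert two_mul_sub_add_one_ne_zero (m + 1) k using 1; push_cast; ring
  rw [show m + 2 - 1 = m + 1 by omega, add_tsub_cancel_right]
  unfold dombCertificate
  push_cast at h1 h0 hr ⊢
  set T := ((dombTerm (m + 2) k : ℕ) : ℚ)
  have e1 : ((dombTerm (m + 1) k : ℕ) : ℚ)
      = ((m : ℚ) + 2 - k) ^ 3 * T / (2 * ((m : ℚ) + 2) ^ 2 * (2 * m - 2 * k + 3)) := by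
    field_simp; linear_combination -h1
  have e0 : ((dombTerm m k : ℕ) : ℚ)
      = ((m : ℚ) + 1 - k) ^ 3 * dombTerm (m + 1) k
        / (2 * ((m : ℚ) + 1) ^ 2 * (2 * m - 2 * k + 1)) := by
    field_simp; linear_combination -h0
  have e3 : ((dombTerm (m + 2) (k + 1) : ℕ) : ℚ)
      = (2 * k + 1) * ((m : ℚ) + 2 - k) ^ 3 * T
        / (((k : ℚ) + 1) ^ 3 * (2 * m - 2 * k + 3)) := by
    field_simp; linear_combination hr
  rw [e0, e1, e3, show 2 * ((m : ℚ) + 2) - 2 * (k + 1) - 1 = 2 * m - 2 * k + 1 by ring,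
    show 2 * ((m : ℚ) + 2) - 2 * k - 1 = 2 * m - 2 * k + 3 by ring]
  field_simp
  ring

theorem domb_recurrence (n : ℕ) (hn : 2 ≤ n) :
    (n : ℤ) ^ 3 * domb n
      - 2 * (2 * (n : ℤ) - 1) * (5 * (n : ℤ) ^ 2 - 5 * (n : ℤ) + 2) * domb (n - 1)
      + 64 * ((n : ℤ) - 1) ^ 3 * domb (n - 2) = 0 := by
  have key : (n : ℚ) ^ 3 * domb n - 2 * (2 * n - 1) * (5 * n ^ 2 - 5 * n + 2) * domb (n - 1)
      + 64 * ((n : ℚ) - 1) ^ 3 * domb (n - 2) = 0 := by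
    rw [domb, ← sum_range_dombTerm (show n - 1 < n + 1 by omega),
      ← sum_range_dombTerm (show n - 2 < n + 1 by omega)]
    push_cast
    rw [mul_sum, mul_sum, mul_sum, ← sum_sub_distrib, ← sum_add_distrib,
      sum_congr rfl fun k _ => dombTerm_telescoping n k hn, sum_range_sub]
    simp [dombCertificate, dombTerm_eq_zero_of_lt]
  exact_mod_cast key

theorem recurrence_N4_ones (f : ℕ → ℤ)
    (hf : ∀ n : ℕ, f n = ∑ x ∈ Finset.HasAntidiagonal.antidiagonal n, ∑ y ∈ Finset.HasAntidiagonal.antidiagonal x.2,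
      ∑ z ∈ Finset.HasAntidiagonal.antidiagonal y.2,
        ((Nat.multinomial Finset.univ ![x.1, y.1, z.1, z.2] : ℤ)) ^ 2) :
    ∀ n : ℕ, 2 ≤ n →
      (n : ℤ) ^ 3 * f n - 2 * (2 * (n : ℤ) - 1) * (5 * (n : ℤ) ^ 2 - 5 * (n : ℤ) + 2) * f (n - 1)
        + 64 * ((n : ℤ) - 1) ^ 3 * f (n - 2) = 0 := by
  have hf_domb : ∀ n, f n = domb n := fun n => by
    rw [hf, ← sum_sq_multinomial_univ_four]
    push_cast
    rfl
  intro n hn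
  simpa only [hf_domb] using domb_recurrence n hn
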